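/- arXiv:2509.10718 — 4 statements merged into one kernel-verified Lean document; each statement's English description precedes it below -/
import Mathlib

section
/- Let $(h_k)_{k\ge 1}$ be defined by $h_1 = 1$ and $h_k = \sum_{l=1}^{k-1} h_l h_{k-l}$ for $k \ge 2$. Then $h_k \le 5^{k-1}/k^2$ for all $k \ge 1$. -/
/-!
The recursion is the Catalan recursion shifted by one, so `h (n + 1) = catalan n`. The ratio
`catalan (n + 1) / catalan n = 2 (2n + 1) / (n + 2)` then gives
`(n + 2)² catalan (n + 1) = 2 (n + 2) (2n + 1) catalan n ≤ 5 (n + 1)² catalan n`,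
and `(n + 1)² catalan n ≤ 5 ^ n` follows by induction.
-/

open Finset

theorem succ_succ_mul_catalan_succ (n : ℕ) :
    (n + 2) * catalan (n + 1) = 2 * (2 * n + 1) * catalan n := by
  apply Nat.eq_of_mul_eq_mul_left n.succ_pos
  calc (n + 1) * ((n + 2) * catalan (n + 1))
      = (n + 1) * ((n + 1 + 1) * catalan (n + 1)) := rfl
    _ = (n + 1) * (n + 1).centralBinom := by rw [succ_mul_catalan_eq_centralBinom]
    _ = 2 * (2 * n + 1) * n.centralBinom := Nat.succ_mul_centralBinom_succ n
    _ = (n + 1) * (2 * (2 * n + 1) * catalan n) := by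
      rw [← succ_mul_catalan_eq_centralBinom]; ring

theorem succ_sq_mul_catalan_le_five_pow (n : ℕ) : (n + 1) ^ 2 * catalan n ≤ 5 ^ n := by
  induction n with
  | zero => simp
  | succ n ih =>
    have hquad : 2 * (n + 2) * (2 * n + 1) ≤ 5 * (n + 1) ^ 2 := by nlinarith
    calc (n + 1 + 1) ^ 2 * catalan (n + 1)
        = (n + 2) * ((n + 2) * catalan (n + 1)) := by ring
      _ = 2 * (n + 2) * (2 * n + 1) * catalan n := by
        rw [succ_succ_mul_catalan_succ]; ring
      _ ≤ 5 * (n + 1) ^ 2 * catalan n := Nat.mul_le_mul_right _ hquad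
      _ = 5 * ((n + 1) ^ 2 * catalan n) := by ring
      _ ≤ 5 ^ (n + 1) := by rw [pow_succ' 5 n]; exact Nat.mul_le_mul_left 5 ih

theorem eq_catalan_of_rec (h : ℕ → ℕ) (h1 : h 1 = 1)
    (hrec : ∀ k, 2 ≤ k → h k = ∑ l ∈ Ico 1 k, h l * h (k - l)) (n : ℕ) :
    h (n + 1) = catalan n := by
  induction n using Nat.strong_induction_on with
  | _ n ih =>
    cases n with
    | zero => rw [h1, catalan_zero]
    | succ n =>
      rw [hrec _ (by omega), sum_Ico_eq_sum_range, catalan_succ',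
        Nat.sum_antidiagonal_eq_sum_range_succ_mk]
      refine sum_congr (by simp) fun i hi => ?_
      have hi : i ≤ n := Nat.lt_succ_iff.mp (mem_range.mp hi)
      rw [add_comm 1 i, ih i (by omega), show n + 1 + 1 - (i + 1) = n - i + 1 by omega,
        ih (n - i) (by omega)]

theorem stmt_1 (h : ℕ → ℕ) (h1 : h 1 = 1)
    (hrec : ∀ k, 2 ≤ k → h k = ∑ l ∈ Finset.Ico 1 k, h l * h (k - l)) :
    ∀ k, 1 ≤ k → (h k : ℝ) ≤ 5 ^ (k - 1) / (k : ℝ) ^ 2 := by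
  intro k hk
  obtain ⟨n, rfl⟩ := Nat.exists_eq_add_of_le' hk
  rw [eq_catalan_of_rec h h1 hrec n, Nat.add_sub_cancel, le_div_iff₀ (by positivity), mul_comm]
  exact_mod_cast succ_sq_mul_catalan_le_five_pow n
end

section
/- Let $(h_k)_{k\ge 1}$ be defined by $h_1 = 1$ and $h_k = \sum_{l=1}^{k-1} h_l h_{k-l}$ for $k \ge 2$. Suppose $\theta > 0$, $r > 0$, and $k \ge 2$ are such that $h_l \le \theta r^l / l^2$ for all $1 \le l \le k$, and $\theta \varrho_k \le 1$ where $\varrho_k = 2\big( (k+1)^2/k^2 + (k^2 + 2k\ln k - 1)/(k(k+1)) \big)$. Then $h_{k+1} \le \theta r^{k+1}/(k+1)^2$. -/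
/-!
Bounding `h_l` and `h_{k+1-l}` termwise turns the convolution into
`θ² r^{k+1} ∑_{l=1}^{k} 1 / (l² (k+1-l)²)`. The partial fraction identity
`1/(a² b²) = (1/a² + 1/b² + 2/(a+b) · (1/a + 1/b)) / (a+b)²` and the symmetry `l ↦ k+1-l`
reduce this sum to `(2 ∑ 1/l² + 4/(k+1) ∑ 1/l) / (k+1)²`; the bounds `∑ 1/l² ≤ 2 - 1/k` and
`∑ 1/l ≤ 1 + log k` show it is at most `ϱ_k / (k+1)²`, and `θ ϱ_k ≤ 1` absorbs one factor `θ`.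
-/

open Finset Real

lemma inv_sq_mul_inv_sq_eq {K : Type*} [Field K] {a b c : K} (ha : a ≠ 0) (hb : b ≠ 0)
    (hc : c ≠ 0) (habc : a + b = c) :
    (a ^ 2)⁻¹ * (b ^ 2)⁻¹ = ((a ^ 2)⁻¹ + (b ^ 2)⁻¹ + 2 / c * (a⁻¹ + b⁻¹)) / c ^ 2 := by
  subst habc
  field_simp
  ring

lemma sum_Icc_comp_reflect {M : Type*} [AddCommMonoid M] (f : ℕ → M) (k : ℕ) :
    ∑ l ∈ Icc 1 k, f (k + 1 - l) = ∑ l ∈ Icc 1 k, f l :=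
  sum_nbij' (fun l => k + 1 - l) (fun l => k + 1 - l)
    (fun l hl => by simp only [mem_Icc] at hl ⊢; omega)
    (fun l hl => by simp only [mem_Icc] at hl ⊢; omega)
    (fun l hl => by simp only [mem_Icc] at hl; omega)
    (fun l hl => by simp only [mem_Icc] at hl; omega)
    (fun _ _ => rfl)

lemma sum_Icc_inv_sq_mul_inv_sq (k : ℕ) :
    ∑ l ∈ Icc 1 k, ((l : ℝ) ^ 2)⁻¹ * (((k + 1 - l : ℕ) : ℝ) ^ 2)⁻¹ =
      (2 * ∑ l ∈ Icc 1 k, ((l : ℝ) ^ 2)⁻¹ + 4 / (k + 1) * ∑ l ∈ Icc 1 k, (l : ℝ)⁻¹) /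
        ((k : ℝ) + 1) ^ 2 := by
  have hterm : ∀ l ∈ Icc 1 k, ((l : ℝ) ^ 2)⁻¹ * (((k + 1 - l : ℕ) : ℝ) ^ 2)⁻¹ =
      (((l : ℝ) ^ 2)⁻¹ + (((k + 1 - l : ℕ) : ℝ) ^ 2)⁻¹ +
        2 / (k + 1) * ((l : ℝ)⁻¹ + ((k + 1 - l : ℕ) : ℝ)⁻¹)) / ((k : ℝ) + 1) ^ 2 := by
    intro l hl
    obtain ⟨hl1, hlk⟩ := mem_Icc.mp hl
    refine inv_sq_mul_inv_sq_eq (by positivity) ?_ (by positivity) ?_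
    · exact Nat.cast_ne_zero.mpr (by omega)
    · rw [Nat.cast_sub (by omega)]
      push_cast
      ring
  rw [sum_congr rfl hterm, ← sum_div, sum_add_distrib, sum_add_distrib, ← mul_sum,
    sum_add_distrib, sum_Icc_comp_reflect (fun n => ((n : ℝ) ^ 2)⁻¹),
    sum_Icc_comp_reflect (fun n => (n : ℝ)⁻¹)]
  ring

lemma sum_Icc_inv_sq_le (k : ℕ) (hk : 1 ≤ k) :
    ∑ l ∈ Icc 1 k, ((l : ℝ) ^ 2)⁻¹ ≤ 2 - (k : ℝ)⁻¹ := by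
  induction k, hk using Nat.le_induction with
  | base => norm_num
  | succ n hn ih =>
    rw [sum_Icc_succ_top (by omega)]
    have hn' : (1 : ℝ) ≤ n := by exact_mod_cast hn
    have hstep : (((n : ℝ) + 1) ^ 2)⁻¹ + ((n : ℝ) + 1)⁻¹ ≤ (n : ℝ)⁻¹ := by
      rw [← one_div, ← one_div, ← one_div, div_add_div _ _ (by positivity) (by positivity),
        div_le_div_iff₀ (by positivity) (by positivity)]
      nlinarith
    push_cast
    linarith

lemma sum_Icc_inv_le_one_add_log (k : ℕ) : ∑ l ∈ Icc 1 k, (l : ℝ)⁻¹ ≤ 1 + log k := by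
  simpa [harmonic_eq_sum_Icc] using harmonic_le_one_add_log k

lemma sum_Icc_inv_sq_mul_inv_sq_le (k : ℕ) (hk : 1 ≤ k) :
    ∑ l ∈ Icc 1 k, ((l : ℝ) ^ 2)⁻¹ * (((k + 1 - l : ℕ) : ℝ) ^ 2)⁻¹ ≤
      2 * (((k : ℝ) + 1) ^ 2 / (k : ℝ) ^ 2 +
        ((k : ℝ) ^ 2 + 2 * (k : ℝ) * log k - 1) / ((k : ℝ) * ((k : ℝ) + 1))) /
        ((k : ℝ) + 1) ^ 2 := by
  rw [sum_Icc_inv_sq_mul_inv_sq]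
  gcongr
  have hk0 : (k : ℝ) ≠ 0 := Nat.cast_ne_zero.mpr (by omega)
  have hρ_split : 2 * (((k : ℝ) + 1) ^ 2 / (k : ℝ) ^ 2 +
        ((k : ℝ) ^ 2 + 2 * (k : ℝ) * log k - 1) / ((k : ℝ) * ((k : ℝ) + 1))) =
      2 * (2 - (k : ℝ)⁻¹) + 4 / (k + 1) * (1 + log k) +
        2 * (3 * k + 1) / ((k : ℝ) ^ 2 * (k + 1)) := by
    field_simp
    ring
  rw [hρ_split]
  calc 2 * ∑ l ∈ Icc 1 k, ((l : ℝ) ^ 2)⁻¹ + 4 / (k + 1) * ∑ l ∈ Icc 1 k, (l : ℝ)⁻¹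
      ≤ 2 * (2 - (k : ℝ)⁻¹) + 4 / (k + 1) * (1 + log k) := by
        gcongr
        · exact sum_Icc_inv_sq_le k hk
        · exact sum_Icc_inv_le_one_add_log k
    _ ≤ _ := le_add_of_nonneg_right (by positivity)

lemma sum_Icc_mul_reflect_le {a : ℕ → ℝ} {θ r : ℝ} {k : ℕ} (ha : ∀ l, 0 ≤ a l)
    (hbound : ∀ l, 1 ≤ l → l ≤ k → a l ≤ θ * r ^ l / (l : ℝ) ^ 2) :
    ∑ l ∈ Icc 1 k, a l * a (k + 1 - l) ≤
      θ ^ 2 * r ^ (k + 1) * ∑ l ∈ Icc 1 k, ((l : ℝ) ^ 2)⁻¹ * (((k + 1 - l : ℕ) : ℝ) ^ 2)⁻¹ := by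
  rw [mul_sum]
  refine sum_le_sum fun l hl => ?_
  obtain ⟨hl1, hlk⟩ := mem_Icc.mp hl
  have hl := hbound l hl1 hlk
  calc a l * a (k + 1 - l)
      ≤ θ * r ^ l / (l : ℝ) ^ 2 * (θ * r ^ (k + 1 - l) / ((k + 1 - l : ℕ) : ℝ) ^ 2) :=
        mul_le_mul hl (hbound _ (by omega) (by omega)) (ha _) ((ha l).trans hl)
    _ = θ ^ 2 * (r ^ l * r ^ (k + 1 - l)) *
          (((l : ℝ) ^ 2)⁻¹ * (((k + 1 - l : ℕ) : ℝ) ^ 2)⁻¹) := by ring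
    _ = _ := by rw [pow_mul_pow_sub r (by omega)]

theorem stmt_2_general (h : ℕ → ℕ)
    (hrec : ∀ k, 2 ≤ k → h k = ∑ l ∈ Finset.Ico 1 k, h l * h (k - l))
    (θ r : ℝ) (hθ : 0 < θ) (hr : 0 < r) (k : ℕ) (hk : 2 ≤ k)
    (hind : ∀ l, 1 ≤ l → l ≤ k → (h l : ℝ) ≤ θ * r ^ l / (l : ℝ) ^ 2)
    (hρ : θ * (2 * (((k : ℝ) + 1) ^ 2 / (k : ℝ) ^ 2 +
        ((k : ℝ) ^ 2 + 2 * (k : ℝ) * Real.log k - 1) / ((k : ℝ) * ((k : ℝ) + 1)))) ≤ 1) :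
    (h (k + 1) : ℝ) ≤ θ * r ^ (k + 1) / ((k : ℝ) + 1) ^ 2 := by
  have hconv : (h (k + 1) : ℝ) = ∑ l ∈ Icc 1 k, (h l : ℝ) * h (k + 1 - l) := by
    rw [hrec (k + 1) (by omega), Ico_add_one_right_eq_Icc]
    push_cast
    rfl
  set ρ := 2 * (((k : ℝ) + 1) ^ 2 / (k : ℝ) ^ 2 +
    ((k : ℝ) ^ 2 + 2 * (k : ℝ) * Real.log k - 1) / ((k : ℝ) * ((k : ℝ) + 1)))
  calc (h (k + 1) : ℝ)
      ≤ θ ^ 2 * r ^ (k + 1) *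
          ∑ l ∈ Icc 1 k, ((l : ℝ) ^ 2)⁻¹ * (((k + 1 - l : ℕ) : ℝ) ^ 2)⁻¹ :=
        hconv ▸ sum_Icc_mul_reflect_le (fun l => Nat.cast_nonneg (h l)) hind
    _ ≤ θ ^ 2 * r ^ (k + 1) * (ρ / ((k : ℝ) + 1) ^ 2) := by
        gcongr
        exact sum_Icc_inv_sq_mul_inv_sq_le k (by omega)
    _ = θ * r ^ (k + 1) * (θ * ρ) / ((k : ℝ) + 1) ^ 2 := by ring
    _ ≤ θ * r ^ (k + 1) * 1 / ((k : ℝ) + 1) ^ 2 := by gcongr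
    _ = θ * r ^ (k + 1) / ((k : ℝ) + 1) ^ 2 := by ring

theorem stmt_2 (h : ℕ → ℕ) (h1 : h 1 = 1)
    (hrec : ∀ k, 2 ≤ k → h k = ∑ l ∈ Finset.Ico 1 k, h l * h (k - l))
    (θ r : ℝ) (hθ : 0 < θ) (hr : 0 < r) (k : ℕ) (hk : 2 ≤ k)
    (hind : ∀ l, 1 ≤ l → l ≤ k → (h l : ℝ) ≤ θ * r ^ l / (l : ℝ) ^ 2)
    (hρ : θ * (2 * (((k : ℝ) + 1) ^ 2 / (k : ℝ) ^ 2 +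
        ((k : ℝ) ^ 2 + 2 * (k : ℝ) * Real.log k - 1) / ((k : ℝ) * ((k : ℝ) + 1)))) ≤ 1) :
    (h (k + 1) : ℝ) ≤ θ * r ^ (k + 1) / ((k : ℝ) + 1) ^ 2 :=
  stmt_2_general h hrec θ r hθ hr k hk hind hρ
end

section
/- For every $k \in \mathbb{R}^3$ and every $R > 0$ there exist $\zeta_1, \zeta_2 \in \mathbb{C}^3$ such that $\zeta_1 \cdot \zeta_1 = 0$, $\zeta_2 \cdot \zeta_2 = 0$, $\zeta_1 + \zeta_2 = i k$, and $|\zeta_1| \ge R$, $|\zeta_2| \ge R$. -/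
/-
Writing ζ = x + i y with x, y real, the bilinear square is ζ · ζ = ‖x‖² - ‖y‖² + 2i⟪x, y⟫ and the
Hermitian norm is ‖ζ‖² = ‖x‖² + ‖y‖². Take an orthonormal pair u, v in k^⊥ and
A = √(R² + ‖k‖²/4). Then ζ₁,₂ = ±A u + i (k/2 ± R v) sum to i k, are null since
‖k/2 ± R v‖² = ‖k‖²/4 + R² = A² and u ⊥ k, v, and have norm at least A ≥ R.
-/

open Complex
open scoped InnerProductSpace

lemma exists_orthonormal_pair_orthogonal {E : Type*} [NormedAddCommGroup E]
    [InnerProductSpace ℝ E] [FiniteDimensional ℝ E] (hE : 3 ≤ Module.finrank ℝ E) (k : E) :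
    ∃ u v : E, ‖u‖ = 1 ∧ ‖v‖ = 1 ∧ ⟪u, v⟫_ℝ = 0 ∧ ⟪k, u⟫_ℝ = 0 ∧ ⟪k, v⟫_ℝ = 0 := by
  have hK : 2 ≤ Module.finrank ℝ (ℝ ∙ k)ᗮ := by
    have := (ℝ ∙ k).finrank_add_finrank_orthogonal
    have : Module.finrank ℝ (ℝ ∙ k) ≤ 1 := by
      simpa using finrank_span_le_card (R := ℝ) ({k} : Set E)
    omega
  let b := stdOrthonormalBasis ℝ (ℝ ∙ k)ᗮ
  let i₀ : Fin (Module.finrank ℝ (ℝ ∙ k)ᗮ) := ⟨0, by omega⟩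
  let i₁ : Fin (Module.finrank ℝ (ℝ ∙ k)ᗮ) := ⟨1, by omega⟩
  have hk : ∀ i, ⟪k, (b i : E)⟫_ℝ = 0 := fun i =>
    Submodule.inner_right_of_mem_orthogonal (Submodule.mem_span_singleton_self k) (b i).2
  exact ⟨b i₀, b i₁, b.orthonormal.1 i₀, b.orthonormal.1 i₁,
    b.orthonormal.2 (by simp [i₀, i₁]), hk i₀, hk i₁⟩

namespace EuclideanSpace

variable {ι : Type*}

def ofReIm (x y : EuclideanSpace ℝ ι) : EuclideanSpace ℂ ι :=
  WithLp.toLp 2 fun j => x j + y j * I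

@[simp]
lemma ofReIm_apply (x y : EuclideanSpace ℝ ι) (j : ι) : ofReIm x y j = x j + y j * I := rfl

variable [Fintype ι]

lemma real_inner_eq_sum (x y : EuclideanSpace ℝ ι) : ⟪x, y⟫_ℝ = ∑ j, x j * y j := by
  simp [PiLp.inner_apply, mul_comm]

lemma sum_ofReIm_mul_self (x y : EuclideanSpace ℝ ι) :
    ∑ j, ofReIm x y j * ofReIm x y j = (‖x‖ ^ 2 - ‖y‖ ^ 2 : ℝ) + 2 * ⟪x, y⟫_ℝ * I := by
  simp only [ofReIm_apply, real_norm_sq_eq, real_inner_eq_sum]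
  push_cast
  simp only [Finset.mul_sum, ← Finset.sum_sub_distrib, ← Finset.sum_add_distrib, Finset.sum_mul]
  refine Finset.sum_congr rfl fun j _ => ?_
  linear_combination (y j : ℂ) ^ 2 * I_sq

lemma norm_ofReIm_sq (x y : EuclideanSpace ℝ ι) : ‖ofReIm x y‖ ^ 2 = ‖x‖ ^ 2 + ‖y‖ ^ 2 := by
  simp only [norm_sq_eq, ofReIm_apply, ← Finset.sum_add_distrib]
  refine Finset.sum_congr rfl fun j _ => ?_
  rw [Complex.sq_norm, normSq_add_mul_I, Real.norm_eq_abs, Real.norm_eq_abs, sq_abs, sq_abs]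

lemma norm_le_norm_ofReIm (x y : EuclideanSpace ℝ ι) : ‖x‖ ≤ ‖ofReIm x y‖ :=
  (sq_le_sq₀ (norm_nonneg _) (norm_nonneg _)).1 <| by
    rw [norm_ofReIm_sq]; exact le_add_of_nonneg_right (sq_nonneg _)

lemma sum_ofReIm_mul_self_eq_zero {x y : EuclideanSpace ℝ ι} (h : ‖x‖ ^ 2 = ‖y‖ ^ 2)
    (hxy : ⟪x, y⟫_ℝ = 0) : ∑ j, ofReIm x y j * ofReIm x y j = 0 := by
  rw [sum_ofReIm_mul_self, h, hxy]
  simp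

lemma sum_ofReIm_mul_self_eq_zero_of_orthonormal {k u v : EuclideanSpace ℝ ι}
    (hu : ‖u‖ = 1) (hv : ‖v‖ = 1) (huv : ⟪u, v⟫_ℝ = 0) (hku : ⟪k, u⟫_ℝ = 0)
    (hkv : ⟪k, v⟫_ℝ = 0) {A B : ℝ} (hAB : A ^ 2 = B ^ 2 + ‖k‖ ^ 2 / 4) :
    let ζ := ofReIm (A • u) ((2⁻¹ : ℝ) • k + B • v)
    ∑ j, ζ j * ζ j = 0 := by
  refine sum_ofReIm_mul_self_eq_zero ?_ ?_
  · rw [norm_add_sq_real, real_inner_smul_left, real_inner_smul_right, hkv, norm_smul, norm_smul,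
      norm_smul, hu, hv]
    simp only [Real.norm_eq_abs, mul_pow, sq_abs, hAB]
    ring
  · rw [real_inner_smul_left, inner_add_right, real_inner_smul_right, real_inner_smul_right,
      real_inner_comm, hku, huv]
    simp

end EuclideanSpace

open EuclideanSpace

theorem stmt_14_general (k : EuclideanSpace ℝ (Fin 3)) (R : ℝ) :
    ∃ ζ₁ ζ₂ : EuclideanSpace ℂ (Fin 3),
      (∑ j, ζ₁ j * ζ₁ j) = 0 ∧ (∑ j, ζ₂ j * ζ₂ j) = 0 ∧
      (∀ j, ζ₁ j + ζ₂ j = Complex.I * (k j : ℂ)) ∧ R ≤ ‖ζ₁‖ ∧ R ≤ ‖ζ₂‖ := by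
  obtain ⟨u, v, hu, hv, huv, hku, hkv⟩ := exists_orthonormal_pair_orthogonal (by simp) k
  set A := √(R ^ 2 + ‖k‖ ^ 2 / 4)
  have hA : A ^ 2 = R ^ 2 + ‖k‖ ^ 2 / 4 := Real.sq_sqrt (by positivity)
  have hRA : R ≤ |A| := (le_abs_self R).trans
    ((Real.abs_le_sqrt (le_add_of_nonneg_right (by positivity))).trans (le_abs_self A))
  have hR_le (a : ℝ) (ha : |a| = |A|) (y : EuclideanSpace ℝ (Fin 3)) :
      R ≤ ‖ofReIm (a • u) y‖ := by
    refine hRA.trans (le_of_eq_of_le ?_ (norm_le_norm_ofReIm _ _))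
    rw [norm_smul, hu, Real.norm_eq_abs, ha, mul_one]
  refine ⟨ofReIm (A • u) ((2⁻¹ : ℝ) • k + R • v), ofReIm ((-A) • u) ((2⁻¹ : ℝ) • k + (-R) • v),
    sum_ofReIm_mul_self_eq_zero_of_orthonormal hu hv huv hku hkv (by rw [hA]),
    sum_ofReIm_mul_self_eq_zero_of_orthonormal hu hv huv hku hkv (by rw [neg_sq, neg_sq, hA]),
    fun j => ?_, hR_le A rfl _, hR_le (-A) (abs_neg A) _⟩
  simp only [ofReIm_apply, PiLp.add_apply, PiLp.smul_apply, smul_eq_mul]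
  push_cast
  ring

theorem stmt_14 (k : EuclideanSpace ℝ (Fin 3)) (R : ℝ) (hR : 0 < R) :
    ∃ ζ₁ ζ₂ : EuclideanSpace ℂ (Fin 3),
      (∑ j, ζ₁ j * ζ₁ j) = 0 ∧ (∑ j, ζ₂ j * ζ₂ j) = 0 ∧
      (∀ j, ζ₁ j + ζ₂ j = Complex.I * (k j : ℂ)) ∧ R ≤ ‖ζ₁‖ ∧ R ≤ ‖ζ₂‖ :=
  stmt_14_general k R
end

section
/- Let $\beta_0, \beta_1, \gamma_0, \gamma_1 > 0$ and let $\beta, \tilde\beta \in [\beta_0, \beta_1]$, $\gamma, \tilde\gamma \in [\gamma_0, \gamma_1]$. Set $\mu = \gamma - i\omega\beta$ and $\tilde\mu = \tilde\gamma - i\omega\tilde\beta$ and let $z^{1/2}$ denote the principal square root. Then there exist $c > 0$ and $\omega_0 > 0$ depending only on $\beta_0,\beta_1,\gamma_0,\gamma_1$ such that for all $\omega \ge \omega_0$: $\mathrm{Im}\big( \mu^{-1} + (\mu\tilde\mu)^{-1/2} \big) \ge c/\omega$. -/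
open Complex Real

lemma sqrt_quadrant (z : ℂ) (hz : z.im < 0) :
    0 ≤ (z ^ ((1:ℂ)/2)).re ∧ (z ^ ((1:ℂ)/2)).im ≤ 0 := by
  have hz0 : z ≠ 0 := fun h => by simp [h] at hz
  rw [Complex.cpow_def_of_ne_zero hz0]
  have harg : (Complex.log z * ((1:ℂ)/2)).im = z.arg / 2 := by
    simp [Complex.mul_im, Complex.log_im]
    ring
  have h1 : -π < z.arg := Complex.neg_pi_lt_arg z
  have h2 : z.arg < 0 := Complex.arg_neg_iff.2 hz
  have hpi := Real.pi_pos
  constructor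
  · rw [Complex.exp_re, harg]
    have : 0 ≤ Real.cos (z.arg / 2) :=
      Real.cos_nonneg_of_mem_Icc ⟨by linarith, by linarith⟩
    positivity
  · rw [Complex.exp_im, harg]
    have hs : Real.sin (z.arg / 2) ≤ 0 :=
      Real.sin_nonpos_of_nonpos_of_neg_pi_le (by linarith) (by linarith)
    have := Real.exp_pos (Complex.log z * ((1:ℂ)/2)).re
    nlinarith

set_option maxHeartbeats 1000000 in
theorem stmt_19 (β₀ β₁ γ₀ γ₁ : ℝ) (hβ₀ : 0 < β₀) (hβ : β₀ ≤ β₁)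
    (hγ₀ : 0 < γ₀) (hγ : γ₀ ≤ γ₁) :
    ∃ c > 0, ∃ ω₀ > 0,
      ∀ β ∈ Set.Icc β₀ β₁, ∀ β' ∈ Set.Icc β₀ β₁,
      ∀ γ ∈ Set.Icc γ₀ γ₁, ∀ γ' ∈ Set.Icc γ₀ γ₁,
      ∀ ω : ℝ, ω₀ ≤ ω →
        c / ω ≤
          ((((γ : ℂ) - Complex.I * (ω : ℂ) * (β : ℂ))⁻¹ +
              ((((γ : ℂ) - Complex.I * (ω : ℂ) * (β : ℂ)) ^ ((1 : ℂ) / 2)) *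
                (((γ' : ℂ) - Complex.I * (ω : ℂ) * (β' : ℂ)) ^ ((1 : ℂ) / 2)))⁻¹)).im := by
  have hβ₁ : 0 < β₁ := lt_of_lt_of_le hβ₀ hβ
  have hγ₁ : 0 < γ₁ := lt_of_lt_of_le hγ₀ hγ
  refine ⟨β₀ / (γ₁^2 + β₁^2), by positivity, 1, one_pos, ?_⟩
  rintro β ⟨hβl, hβu⟩ β' ⟨hβ'l, hβ'u⟩ γ ⟨hγl, hγu⟩ γ' ⟨hγ'l, hγ'u⟩ ω hω
  have hω0 : 0 < ω := lt_of_lt_of_le one_pos hω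
  set μ : ℂ := (γ : ℂ) - Complex.I * (ω : ℂ) * (β : ℂ) with hμdef
  set μ' : ℂ := (γ' : ℂ) - Complex.I * (ω : ℂ) * (β' : ℂ) with hμ'def
  have hμim : μ.im = -(ω * β) := by simp [hμdef]
  have hμre : μ.re = γ := by simp [hμdef]
  have hμ'im : μ'.im = -(ω * β') := by simp [hμ'def]
  have hβpos : 0 < β := lt_of_lt_of_le hβ₀ hβl
  have hβ'pos : 0 < β' := lt_of_lt_of_le hβ₀ hβ'l
  have hγpos : 0 < γ := lt_of_lt_of_le hγ₀ hγl
  have him : μ.im < 0 := by rw [hμim]; nlinarith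
  have him' : μ'.im < 0 := by rw [hμ'im]; nlinarith
  obtain ⟨h1re, h1im⟩ := sqrt_quadrant μ him
  obtain ⟨h2re, h2im⟩ := sqrt_quadrant μ' him'
  rw [Complex.add_im]
  -- second summand is nonnegative
  have hprod : (μ ^ ((1:ℂ)/2) * μ' ^ ((1:ℂ)/2)).im ≤ 0 := by
    rw [Complex.mul_im]; nlinarith
  have h2 : 0 ≤ ((μ ^ ((1:ℂ)/2) * μ' ^ ((1:ℂ)/2))⁻¹).im := by
    rw [Complex.inv_im]
    exact div_nonneg (neg_nonneg.2 hprod) (Complex.normSq_nonneg _)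
  have h1 : β₀ / (γ₁^2 + β₁^2) / ω ≤ (μ⁻¹).im := by
    rw [Complex.inv_im, Complex.normSq_apply, hμim, hμre]
    have hns : 0 < γ * γ + -(ω * β) * -(ω * β) := by nlinarith
    rw [div_div, div_le_div_iff₀ (by positivity) hns]
    have hγω : γ ≤ ω * γ₁ := by nlinarith
    have e1 : γ * γ ≤ (ω * γ₁) * (ω * γ₁) := mul_self_le_mul_self hγpos.le hγω
    have t1 : β₀ * (γ * γ) ≤ β * ((ω * γ₁) * (ω * γ₁)) :=
      mul_le_mul hβl e1 (mul_self_nonneg γ) hβpos.le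
    have t2 : β₀ * (β * β) ≤ β * (β₁ * β₁) :=
      mul_le_mul hβl (mul_self_le_mul_self hβpos.le hβu) (mul_self_nonneg β) hβpos.le
    have t2' : ω * ω * (β₀ * (β * β)) ≤ ω * ω * (β * (β₁ * β₁)) :=
      mul_le_mul_of_nonneg_left t2 (by positivity)
    nlinarith [t1, t2']
  linarith
end
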